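/- arXiv:2503.09299 — 4 statements merged into one kernel-verified Lean document; each statement's English description precedes it below -/
import Mathlib

section
/- Let H be a real Hilbert space, γ > 0, and let 𝕎 be a self-adjoint continuous linear operator on H with γ‖𝕎‖_op < 1. Then Id − γ𝕎 is invertible and for every f ∈ H, ⟨(Id − γ𝕎)⁻²f, f⟩ ≥ ‖f‖² / (1 + γ‖𝕎‖_op)²; i.e., the squared resolvent (Id − γ𝕎)⁻² is strongly monotone with constant (1 + γ‖𝕎‖_op)^{−2}. -/
open scoped RealInnerProductSpace

/-!
Write `T = 1 - γ𝕎`, which is invertible by the Neumann series, and `g = T⁻¹ f`. Since `T` is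
symmetric, `⟪T⁻² f, f⟫ = ⟪T⁻¹ g, T g⟫ = ‖g‖²`, while `‖f‖ = ‖T g‖ ≤ ‖T‖ ‖g‖ ≤ (1 + γ‖𝕎‖) ‖g‖`.
-/

namespace ContinuousLinearMap

section Normed

variable {𝕜 E : Type*} [NontriviallyNormedField 𝕜] [NormedAddCommGroup E] [NormedSpace 𝕜 E]

theorem apply_inverse_apply {T : E →L[𝕜] E} (hT : IsUnit T) (f : E) :
    T (Ring.inverse T f) = f := by
  rw [← mul_apply_eq_comp, Ring.mul_inverse_cancel T hT, one_apply_eq_self]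

theorem norm_le_opNorm_mul_norm_inverse_apply {T : E →L[𝕜] E} (hT : IsUnit T) (f : E) :
    ‖f‖ ≤ ‖T‖ * ‖Ring.inverse T f‖ := by
  conv_lhs => rw [← apply_inverse_apply hT f]
  exact T.le_opNorm _

end Normed

theorem norm_one_sub_smul_le {E : Type*} [NormedAddCommGroup E] [NormedSpace ℝ E]
    {γ : ℝ} (hγ : 0 ≤ γ) (W : E →L[ℝ] E) :
    ‖1 - γ • W‖ ≤ 1 + γ * ‖W‖ := by
  calc ‖1 - γ • W‖ ≤ ‖(1 : E →L[ℝ] E)‖ + ‖γ • W‖ := norm_sub_le _ _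
    _ ≤ 1 + γ * ‖W‖ := by
        rw [norm_smul, Real.norm_of_nonneg hγ]
        gcongr
        exact norm_id_le

theorem inner_inverse_sq_apply_self {𝕜 E : Type*} [RCLike 𝕜] [NormedAddCommGroup E]
    [InnerProductSpace 𝕜 E] {T : E →L[𝕜] E} (hT : IsUnit T)
    (hsym : (T : E →ₗ[𝕜] E).IsSymmetric) (f : E) :
    inner 𝕜 ((Ring.inverse T ^ 2) f) f = (‖Ring.inverse T f‖ ^ 2 : 𝕜) := by
  set S := Ring.inverse T
  calc inner 𝕜 ((S ^ 2) f) f = inner 𝕜 (S (S f)) (T (S f)) := by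
        rw [pow_two, mul_apply_eq_comp, apply_inverse_apply hT]
    _ = inner 𝕜 (T (S (S f))) (S f) := (hsym _ _).symm
    _ = (‖S f‖ ^ 2 : 𝕜) := by
        rw [apply_inverse_apply hT, inner_self_eq_norm_sq_to_K]

theorem sq_norm_div_sq_le_inner_inverse_sq_apply_self {E : Type*} [NormedAddCommGroup E]
    [InnerProductSpace ℝ E] {T : E →L[ℝ] E} (hT : IsUnit T)
    (hsym : (T : E →ₗ[ℝ] E).IsSymmetric) {c : ℝ} (hc : ‖T‖ ≤ c) (f : E) :
    ‖f‖ ^ 2 / c ^ 2 ≤ ⟪(Ring.inverse T ^ 2) f, f⟫ := by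
  have hf : ‖f‖ ≤ c * ‖Ring.inverse T f‖ :=
    (norm_le_opNorm_mul_norm_inverse_apply hT f).trans
      (mul_le_mul_of_nonneg_right hc (norm_nonneg _))
  rw [inner_inverse_sq_apply_self hT hsym]
  refine div_le_of_le_mul₀ (sq_nonneg c) (sq_nonneg _) ?_
  rw [← mul_pow, mul_comm]
  exact pow_le_pow_left₀ (norm_nonneg f) hf 2

end ContinuousLinearMap

open ContinuousLinearMap in
/-- strong monotonicity of the squared resolvent `(Id - γ𝕎)⁻²` on a real
Hilbert space, with constant `(1 + γ‖𝕎‖)⁻²`. -/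
theorem stmt2 {H : Type*} [NormedAddCommGroup H] [InnerProductSpace ℝ H] [CompleteSpace H]
    (γ : ℝ) (hγ : 0 < γ) (W : H →L[ℝ] H)
    (hsa : ∀ f g : H, ⟪W f, g⟫ = ⟪f, W g⟫)
    (hW : γ * ‖W‖ < 1) :
    IsUnit (1 - γ • W) ∧
      ∀ f : H, ‖f‖ ^ 2 / (1 + γ * ‖W‖) ^ 2 ≤ ⟪(Ring.inverse (1 - γ • W) ^ 2) f, f⟫ := by
  have hunit : IsUnit (1 - γ • W) :=
    isUnit_one_sub_of_norm_lt_one (by rwa [norm_smul, Real.norm_of_nonneg hγ.le])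
  have hsym : ((1 - γ • W : H →L[ℝ] H) : H →ₗ[ℝ] H).IsSymmetric := by
    rw [toLinearMap_sub, toLinearMap_smul, toLinearMap_one]
    exact LinearMap.IsSymmetric.one.sub (LinearMap.IsSymmetric.smul (conj_trivial γ) hsa)
  exact ⟨hunit, sq_norm_div_sq_le_inner_inverse_sq_apply_self hunit hsym
    (norm_one_sub_smul_le hγ.le W)⟩
end

section
/- Let E be a Banach space, γ > 0, and let X, Y be continuous linear operators on E with γ‖X‖_op < 1 and γ‖Y‖_op < 1. Then ‖(Id − γX)⁻² − (Id − γY)⁻²‖_op ≤ 2γ‖X − Y‖_op / (1 − γ·max(‖X‖_op, ‖Y‖_op))³. -/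
/-- perturbation bound for squared resolvents of operators on a Banach space. -/
theorem stmt3 {E : Type*} [NormedAddCommGroup E] [NormedSpace ℝ E] [CompleteSpace E]
    (γ : ℝ) (hγ : 0 < γ) (X Y : E →L[ℝ] E)
    (hX : γ * ‖X‖ < 1) (hY : γ * ‖Y‖ < 1) :
    ‖Ring.inverse (1 - γ • X) ^ 2 - Ring.inverse (1 - γ • Y) ^ 2‖ ≤
      2 * γ * ‖X - Y‖ / (1 - γ * max ‖X‖ ‖Y‖) ^ 3 := by
  have hsX : ‖γ • X‖ = γ * ‖X‖ := by
    rw [norm_smul γ X, Real.norm_of_nonneg hγ.le]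
  have hsY : ‖γ • Y‖ = γ * ‖Y‖ := by
    rw [norm_smul γ Y, Real.norm_of_nonneg hγ.le]
  have hnX : ‖γ • X‖ < 1 := by rw [hsX]; exact hX
  have hnY : ‖γ • Y‖ < 1 := by rw [hsY]; exact hY
  set A := Ring.inverse (1 - γ • X) with hA
  set B := Ring.inverse (1 - γ • Y) with hB
  have hAu : IsUnit ((1 : E →L[ℝ] E) - γ • X) := isUnit_one_sub_of_norm_lt_one hnX
  have hBu : IsUnit ((1 : E →L[ℝ] E) - γ • Y) := isUnit_one_sub_of_norm_lt_one hnY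
  have hA1 : A * (1 - γ • X) = 1 := Ring.inverse_mul_cancel _ hAu
  have hB2 : (1 - γ • Y) * B = 1 := Ring.mul_inverse_cancel _ hBu
  have hone : ‖(1 : E →L[ℝ] E)‖ ≤ 1 := by
    rw [ContinuousLinearMap.one_def]
    exact ContinuousLinearMap.norm_id_le
  -- norm bounds
  have hnormA : ‖A‖ ≤ (1 - ‖γ • X‖)⁻¹ := by
    rw [hA, ← geom_series_eq_inverse _ hnX]
    have := tsum_geometric_le_of_norm_lt_one _ hnX
    linarith
  have hnormB : ‖B‖ ≤ (1 - ‖γ • Y‖)⁻¹ := by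
    rw [hB, ← geom_series_eq_inverse _ hnY]
    have := tsum_geometric_le_of_norm_lt_one _ hnY
    linarith
  set m := max ‖X‖ ‖Y‖ with hm
  have hmX : γ * ‖X‖ ≤ γ * m := mul_le_mul_of_nonneg_left (le_max_left _ _) hγ.le
  have hmY : γ * ‖Y‖ ≤ γ * m := mul_le_mul_of_nonneg_left (le_max_right _ _) hγ.le
  have hγm : γ * m < 1 := by
    rcases max_cases ‖X‖ ‖Y‖ with ⟨h, _⟩ | ⟨h, _⟩ <;> rw [hm, h] <;> assumption
  have hpos : 0 < 1 - γ * m := by linarith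
  set c := (1 - γ * m)⁻¹ with hc
  have hcpos : 0 < c := inv_pos.mpr hpos
  have hAc : ‖A‖ ≤ c := by
    refine hnormA.trans ?_
    rw [hsX, hc]
    apply inv_anti₀ <;> linarith
  have hBc : ‖B‖ ≤ c := by
    refine hnormB.trans ?_
    rw [hsY, hc]
    apply inv_anti₀ <;> linarith
  -- key identity: A - B = A * (γ • (X - Y)) * B
  have hdiff : A - B = A * (γ • (X - Y)) * B := by
    have h1 : A * (γ • (X - Y)) * B = A * ((1 - γ • Y) - (1 - γ • X)) * B := by
      congr 2
      rw [smul_sub]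
      abel
    rw [h1, mul_sub, sub_mul, mul_assoc A _ B, hB2, mul_one, hA1, one_mul]
  have hABnorm : ‖A - B‖ ≤ c * (γ * ‖X - Y‖) * c := by
    rw [hdiff]
    have hsXY : ‖γ • (X - Y)‖ = γ * ‖X - Y‖ := by
      rw [norm_smul γ (X - Y), Real.norm_of_nonneg hγ.le]
    calc ‖A * (γ • (X - Y)) * B‖ ≤ ‖A * (γ • (X - Y))‖ * ‖B‖ := norm_mul_le _ _
      _ ≤ ‖A‖ * ‖γ • (X - Y)‖ * ‖B‖ := by
          gcongr; exact norm_mul_le _ _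
      _ = ‖A‖ * (γ * ‖X - Y‖) * ‖B‖ := by rw [hsXY]
      _ ≤ c * (γ * ‖X - Y‖) * c := by
          gcongr <;> positivity
  have hsq : A ^ 2 - B ^ 2 = A * (A - B) + (A - B) * B := by
    noncomm_ring
  calc ‖A ^ 2 - B ^ 2‖ = ‖A * (A - B) + (A - B) * B‖ := by rw [hsq]
    _ ≤ ‖A * (A - B)‖ + ‖(A - B) * B‖ := norm_add_le _ _
    _ ≤ ‖A‖ * ‖A - B‖ + ‖A - B‖ * ‖B‖ := by
        gcongr <;> exact norm_mul_le _ _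
    _ ≤ c * (c * (γ * ‖X - Y‖) * c) + (c * (γ * ‖X - Y‖) * c) * c := by
        gcongr <;> first | exact norm_nonneg _ | positivity
    _ = 2 * γ * ‖X - Y‖ / (1 - γ * m) ^ 3 := by
        rw [hc]
        field_simp
        ring
end

section
/- Fix n ≥ 1 and ρ ∈ (0,1]. For m ∈ (−1/2, 1/2), define the graphon W_m : [0,1]² → [0,1] by W_m(x,y) = 3/4 if (x ≤ 1/2 + m and y ≤ 1/2 + m) or (x > 1/2 + m and y > 1/2 + m), and W_m(x,y) = 1/4 otherwise, and let P_m denote the law of the adjacency matrix A under the sampling model with graphon W_m and sparsity ρ. Then for every Δ ∈ (0, 1/2), the Kullback–Leibler divergence satisfies KL(P_Δ ‖ P_0) ≤ 16·n·Δ². -/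
open MeasureTheory

/-- The uniform probability measure on `[0,1]`. -/
noncomputable def unif01 : Measure ℝ := volume.restrict (Set.Icc (0:ℝ) 1)

/-- Law of `n` i.i.d. uniform random variables on `[0,1]`. -/
noncomputable def Pxi (n : ℕ) : Measure (Fin n → ℝ) := Measure.pi fun _ => unif01

/-- The canonical probability space of the graphon sampling model: the first coordinate
carries the `n` i.i.d. uniform sample points, the second coordinate carries an independent
array of i.i.d. uniform variables used to generate the Bernoulli edge indicators. -/
noncomputable def Pg (n : ℕ) : Measure ((Fin n → ℝ) × (Fin n → Fin n → ℝ)) :=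
  (Pxi n).prod (Measure.pi fun _ : Fin n => Measure.pi fun _ : Fin n => unif01)

/-- The order statistics of `ξ`: `sortedVec ξ i` is the `(i+1)`-st smallest value of `ξ`. -/
noncomputable def sortedVec {n : ℕ} (ξ : Fin n → ℝ) : Fin n → ℝ := ξ ∘ ⇑(Tuple.sort ξ)

/-- The weight matrix `Q` with `Q i j = ρ · W(ξ₍ᵢ₎, ξ₍ⱼ₎)` (order statistics of `ξ`). -/
noncomputable def Qmat (n : ℕ) (W : ℝ → ℝ → ℝ) (ρ : ℝ) (ξ : Fin n → ℝ) :
    Matrix (Fin n) (Fin n) ℝ :=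
  Matrix.of fun i j => ρ * W (sortedVec ξ i) (sortedVec ξ j)

/-- The adjacency matrix sampled from the graphon model: given the uniforms `ω.2`,
`A i j = 1` iff `ω.2 i j ≤ Q i j` (for `i < j`, symmetrized, zero diagonal), so that
conditionally on `ξ = ω.1` the entries `A i j`, `i < j`, are independent `Bernoulli (Q i j)`. -/
noncomputable def Amat (n : ℕ) (W : ℝ → ℝ → ℝ) (ρ : ℝ)
    (ω : (Fin n → ℝ) × (Fin n → Fin n → ℝ)) : Matrix (Fin n) (Fin n) ℝ :=
  Matrix.of fun i j =>
    if i = j then 0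
    else if i < j then (if ω.2 i j ≤ Qmat n W ρ ω.1 i j then 1 else 0)
    else (if ω.2 j i ≤ Qmat n W ρ ω.1 j i then 1 else 0)

/-- The number of singular values of `M` (square roots of eigenvalues of `Mᵀ M`,
counted with multiplicity) that are `≥ t`. -/
noncomputable def svCount {n : ℕ} (M : Matrix (Fin n) (Fin n) ℝ) (t : ℝ) : ℕ :=
  (Finset.univ.filter fun i : Fin n =>
    t ≤ Real.sqrt ((show (M.transpose * M).IsHermitian by
      rw [← Matrix.conjTranspose_eq_transpose_of_trivial]
      exact Matrix.isHermitian_conjTranspose_mul_self M).eigenvalues i)).card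

/-- Kullback–Leibler divergence between two finitely-supported measures, computed atom by atom,
with the convention `0 · log 0 = 0`. -/
noncomputable def KLfin {α : Type*} [MeasurableSpace α] (P Q : Measure α) : ℝ :=
  ∑' a : α, (P {a}).toReal * Real.log ((P {a}).toReal / (Q {a}).toReal)

/-- The two-community graphon `W_m` used in the lower bound: `W_m = 3/4` on the diagonal
blocks split at `1/2 + m` and `1/4` off-diagonal. -/
noncomputable def Wm (m : ℝ) (x y : ℝ) : ℝ :=
  if (x ≤ 1/2 + m ∧ y ≤ 1/2 + m) ∨ (1/2 + m < x ∧ 1/2 + m < y) then 3/4 else 1/4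


/-!
Given the pattern `σ ∈ {0,1}ⁿ` recording which sample points fall below the split `1/2 + m`,
the sorted points in the first block are exactly the first `#σ` ones, so the edges are
independent Bernoulli variables with a law `K_σ` that does not depend on `m`, while `σ` itself
has the product law `Ber(1/2 + m)^⊗n`. Both laws of `A` are therefore mixtures `∑ σ π_m(σ) K_σ`
with the same kernel, and by the log-sum inequality `KL(P_Δ ‖ P_0) ≤ KL(π_Δ ‖ π_0)`. This
tensorizes to `n · KL(Ber(1/2 + Δ) ‖ Ber(1/2)) ≤ n (2Δ)²`, using `log x ≤ x - 1`.
-/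

open Finset

noncomputable def bernMass (θ : ℝ) (c : Bool) : ℝ := if c then θ else 1 - θ

lemma bernMass_nonneg {θ : ℝ} (hθ : θ ∈ Set.Icc (0:ℝ) 1) (c : Bool) : 0 ≤ bernMass θ c := by
  unfold bernMass; split <;> linarith [hθ.1, hθ.2]

lemma bernMass_pos {θ : ℝ} (hθ : θ ∈ Set.Ioo (0:ℝ) 1) (c : Bool) : 0 < bernMass θ c := by
  unfold bernMass; split <;> linarith [hθ.1, hθ.2]

lemma sum_bernMass (θ : ℝ) : ∑ c, bernMass θ c = 1 := by
  simp [bernMass]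

noncomputable def prodBernMass {ι : Type*} [Fintype ι] (θ : ι → ℝ) (σ : ι → Bool) : ℝ :=
  ∏ i, bernMass (θ i) (σ i)

lemma prodBernMass_nonneg {ι : Type*} [Fintype ι] {θ : ι → ℝ} (hθ : ∀ i, θ i ∈ Set.Icc (0:ℝ) 1)
    (σ : ι → Bool) : 0 ≤ prodBernMass θ σ :=
  prod_nonneg fun i _ => bernMass_nonneg (hθ i) (σ i)

lemma prodBernMass_pos {ι : Type*} [Fintype ι] {θ : ι → ℝ} (hθ : ∀ i, θ i ∈ Set.Ioo (0:ℝ) 1)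
    (σ : ι → Bool) : 0 < prodBernMass θ σ :=
  prod_pos fun i _ => bernMass_pos (hθ i) (σ i)

lemma sum_prodBernMass {ι : Type*} [Fintype ι] [DecidableEq ι] (θ : ι → ℝ) :
    ∑ σ, prodBernMass θ σ = 1 := by
  simp only [prodBernMass]
  rw [← Fintype.prod_sum]
  simp only [sum_bernMass, prod_const_one]

lemma sum_prod_mul_apply {ι α : Type*} [Fintype ι] [DecidableEq ι] [Fintype α]
    (p : ι → α → ℝ) (hp : ∀ i, ∑ a, p i a = 1) (f : α → ℝ) (i : ι) :
    ∑ σ : ι → α, (∏ j, p j (σ j)) * f (σ i) = ∑ a, p i a * f a := by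
  set g : ι → α → ℝ := fun j a => p j a * if j = i then f a else 1
  calc ∑ σ : ι → α, (∏ j, p j (σ j)) * f (σ i) = ∑ σ : ι → α, ∏ j, g j (σ j) := by
        simp only [g, prod_mul_distrib, Fintype.prod_ite_eq']
    _ = ∏ j, ∑ a, g j a := (Fintype.prod_sum g).symm
    _ = ∑ a, p i a * f a := by
        rw [prod_eq_single i (fun j _ hj => by simp [g, hj, hp]) (by simp)]
        simp [g]

lemma sum_mul_log_div_le_sum_mul_log_div {ι : Type*} [Fintype ι] [Nonempty ι] (x y : ι → ℝ)
    (hx : ∀ i, 0 < x i) (hy : ∀ i, 0 < y i) :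
    (∑ i, x i) * Real.log ((∑ i, x i) / ∑ i, y i) ≤ ∑ i, x i * Real.log (x i / y i) := by
  set X := ∑ i, x i
  set Y := ∑ i, y i
  have hX : 0 < X := sum_pos (fun i _ => hx i) univ_nonempty
  have hY : 0 < Y := sum_pos (fun i _ => hy i) univ_nonempty
  have key : ∀ i, x i * Real.log (X / Y) - x i * Real.log (x i / y i) ≤ X / Y * y i - x i := by
    intro i
    have hq : 0 < X / Y * (y i / x i) := mul_pos (div_pos hX hY) (div_pos (hy i) (hx i))
    have hlog := Real.log_le_sub_one_of_pos hq
    rw [Real.log_mul (div_pos hX hY).ne' (div_pos (hy i) (hx i)).ne',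
      Real.log_div (hy i).ne' (hx i).ne'] at hlog
    calc x i * Real.log (X / Y) - x i * Real.log (x i / y i)
        = x i * (Real.log (X / Y) + (Real.log (y i) - Real.log (x i))) := by
          rw [Real.log_div (hx i).ne' (hy i).ne']; ring
      _ ≤ x i * (X / Y * (y i / x i) - 1) := mul_le_mul_of_nonneg_left hlog (hx i).le
      _ = X / Y * y i - x i := by field_simp [(hx i).ne']
  have := sum_le_sum fun i (_ : i ∈ univ) => key i
  rw [sum_sub_distrib, sum_sub_distrib, ← sum_mul, ← mul_sum, div_mul_cancel₀ _ hY.ne'] at this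
  linarith

lemma sum_mixture_mul_log_div_le {ι α : Type*} [Fintype ι] [Nonempty ι] [Fintype α]
    (π π' : ι → ℝ) (K : ι → α → ℝ) (hπ : ∀ i, 0 < π i) (hπ' : ∀ i, 0 < π' i)
    (hK : ∀ i a, 0 < K i a) (hK1 : ∀ i, ∑ a, K i a = 1) :
    ∑ a, (∑ i, π i * K i a) * Real.log ((∑ i, π i * K i a) / ∑ i, π' i * K i a) ≤
      ∑ i, π i * Real.log (π i / π' i) :=
  calc _ ≤ ∑ a, ∑ i, π i * K i a * Real.log (π i / π' i) := sum_le_sum fun a _ => by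
          have := sum_mul_log_div_le_sum_mul_log_div (fun i => π i * K i a)
            (fun i => π' i * K i a) (fun i => mul_pos (hπ i) (hK i a))
            (fun i => mul_pos (hπ' i) (hK i a))
          simpa only [mul_div_mul_right _ _ (hK _ a).ne'] using this
    _ = ∑ i, π i * Real.log (π i / π' i) := by
          rw [sum_comm]
          refine sum_congr rfl fun i _ => ?_
          rw [← sum_mul, ← mul_sum, hK1, mul_one]

lemma sum_prod_mul_log_div_prod {ι α : Type*} [Fintype ι] [DecidableEq ι] [Fintype α]
    (p q : ι → α → ℝ) (hp : ∀ i a, 0 < p i a) (hq : ∀ i a, 0 < q i a)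
    (hp1 : ∀ i, ∑ a, p i a = 1) :
    ∑ σ : ι → α, (∏ i, p i (σ i)) * Real.log ((∏ i, p i (σ i)) / ∏ i, q i (σ i)) =
      ∑ i, ∑ a, p i a * Real.log (p i a / q i a) := by
  simp_rw [← prod_div_distrib, Real.log_prod fun i _ => (div_pos (hp i _) (hq i _)).ne', mul_sum]
  rw [sum_comm]
  exact sum_congr rfl fun i _ => sum_prod_mul_apply p hp1 (fun a => Real.log (p i a / q i a)) i

lemma sum_bernMass_mul_log_div_half_le {t : ℝ} (ht : t ∈ Set.Ioo (0:ℝ) 1) :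
    ∑ c, bernMass t c * Real.log (bernMass t c / bernMass (1/2) c) ≤ (2 * t - 1) ^ 2 := by
  have hterm : ∀ c, bernMass t c * Real.log (bernMass t c / bernMass (1/2) c) ≤
      bernMass t c * (2 * bernMass t c - 1) := by
    intro c
    have hx := bernMass_pos ht c
    have hhalf : bernMass (1/2) c = 1/2 := by cases c <;> norm_num [bernMass]
    rw [hhalf]
    exact mul_le_mul_of_nonneg_left
      ((Real.log_le_sub_one_of_pos (by positivity)).trans_eq (by ring)) hx.le
  calc _ ≤ ∑ c, bernMass t c * (2 * bernMass t c - 1) := sum_le_sum fun c _ => hterm c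
    _ = (2 * t - 1) ^ 2 := by simp [bernMass]; ring

lemma sum_prodBernMass_mul_log_div_half_le {ι : Type*} [Fintype ι] [DecidableEq ι] {t : ℝ}
    (ht : t ∈ Set.Ioo (0:ℝ) 1) :
    ∑ σ : ι → Bool, prodBernMass (fun _ => t) σ *
        Real.log (prodBernMass (fun _ => t) σ / prodBernMass (fun _ => 1/2) σ) ≤
      Fintype.card ι * (2 * t - 1) ^ 2 := by
  have hhalf : (1/2 : ℝ) ∈ Set.Ioo 0 1 := by norm_num
  calc _ = ∑ _ : ι, ∑ c, bernMass t c * Real.log (bernMass t c / bernMass (1/2) c) :=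
        sum_prod_mul_log_div_prod (fun _ => bernMass t) (fun _ => bernMass (1/2))
          (fun _ => bernMass_pos ht) (fun _ => bernMass_pos hhalf) fun _ => sum_bernMass t
    _ ≤ ∑ _ : ι, (2 * t - 1) ^ 2 := sum_le_sum fun _ _ => sum_bernMass_mul_log_div_half_le ht
    _ = Fintype.card ι * (2 * t - 1) ^ 2 := by simp

lemma KLfin_map_of_injective {α β : Type*} [MeasurableSpace α] [MeasurableSingletonClass α]
    [Fintype β] [MeasurableSpace β] [DiscreteMeasurableSpace β] (P Q : Measure β)
    {f : β → α} (hf : Function.Injective f) :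
    KLfin (P.map f) (Q.map f) =
      ∑ b, (P {b}).toReal * Real.log ((P {b}).toReal / (Q {b}).toReal) := by
  classical
  have hmap : ∀ (R : Measure β) b, R.map f {f b} = R {b} := fun R b => by
    rw [Measure.map_apply .of_discrete (measurableSet_singleton _), ← Set.image_singleton,
      hf.preimage_image]
  rw [KLfin, tsum_eq_sum (s := univ.image f), sum_image fun b _ b' _ h => hf h]
  · simp only [hmap]
  · intro a ha
    have : f ⁻¹' {a} = ∅ := by ext b; simpa using fun h => ha (by simp [← h])
    simp [Measure.map_apply .of_discrete (measurableSet_singleton _), this]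

noncomputable def thresholdPattern {ι : Type*} (θ : ι → ℝ) (x : ι → ℝ) : ι → Bool :=
  fun i => decide (x i ≤ θ i)

lemma measurable_thresholdPattern {ι : Type*} [Countable ι] (θ : ι → ℝ) :
    Measurable (thresholdPattern θ) :=
  measurable_pi_iff.2 fun i => measurable_to_bool (f := fun x => thresholdPattern θ x i) <| by
    convert measurableSet_le (f := fun x : ι → ℝ => x i) (g := fun _ => θ i)
      (measurable_pi_apply i) measurable_const using 1
    ext; simp [thresholdPattern]

instance : IsProbabilityMeasure unif01 := ⟨by simp [unif01]⟩

lemma unif01_setOf_decide_le {x : ℝ} (hx : x ∈ Set.Icc (0:ℝ) 1) (c : Bool) :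
    unif01 {y | decide (y ≤ x) = c} = ENNReal.ofReal (bernMass x c) := by
  have hIic : unif01 (Set.Iic x) = ENNReal.ofReal x := by
    have : Set.Iic x ∩ Set.Icc 0 1 = Set.Icc 0 x := by
      ext y
      simp only [Set.mem_inter_iff, Set.mem_Iic, Set.mem_Icc]
      exact ⟨fun h => ⟨h.2.1, h.1⟩, fun h => ⟨h.2, h.1, h.2.trans hx.2⟩⟩
    rw [unif01, Measure.restrict_apply measurableSet_Iic, this, Real.volume_Icc, sub_zero]
  cases c
  · have : {y : ℝ | decide (y ≤ x) = false} = (Set.Iic x)ᶜ := by ext; simp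
    rw [this, prob_compl_eq_one_sub measurableSet_Iic, hIic, bernMass, if_neg Bool.false_ne_true,
      ENNReal.ofReal_sub _ hx.1, ENNReal.ofReal_one]
  · have : {y : ℝ | decide (y ≤ x) = true} = Set.Iic x := by ext; simp
    rw [this, hIic, bernMass, if_pos rfl]

lemma pi_unif01_thresholdPattern_preimage {ι : Type*} [Fintype ι] {θ : ι → ℝ}
    (hθ : ∀ i, θ i ∈ Set.Icc (0:ℝ) 1) (σ : ι → Bool) :
    Measure.pi (fun _ : ι => unif01) (thresholdPattern θ ⁻¹' {σ}) =
      ENNReal.ofReal (prodBernMass θ σ) := by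
  have : thresholdPattern θ ⁻¹' {σ} = Set.univ.pi fun i => {y | decide (y ≤ θ i) = σ i} := by
    ext x; simp [thresholdPattern, funext_iff]
  rw [this, Measure.pi_pi, prodBernMass,
    ENNReal.ofReal_prod_of_nonneg fun i _ => ?_]
  · exact prod_congr rfl fun i _ => unif01_setOf_decide_le (hθ i) (σ i)
  · exact bernMass_nonneg (hθ i) (σ i)

lemma setOf_mem_comp_eq_iUnion {α β γ : Type*} (f : α → γ) (E : γ → Set β) :
    {ω : α × β | ω.2 ∈ E (f ω.1)} = ⋃ c, (f ⁻¹' {c}) ×ˢ E c := by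
  ext; simp

lemma measurableSet_setOf_mem_comp {α β γ : Type*} [MeasurableSpace α] [MeasurableSpace β]
    [MeasurableSpace γ] [Countable γ] [MeasurableSingletonClass γ] {f : α → γ}
    (hf : Measurable f) {E : γ → Set β} (hE : ∀ c, MeasurableSet (E c)) :
    MeasurableSet {ω : α × β | ω.2 ∈ E (f ω.1)} := by
  rw [setOf_mem_comp_eq_iUnion]
  exact .iUnion fun c => (hf (measurableSet_singleton c)).prod (hE c)

lemma MeasureTheory.Measure.prod_setOf_mem_comp {α β γ : Type*} [MeasurableSpace α]
    [MeasurableSpace β] [MeasurableSpace γ] [Countable γ] [MeasurableSingletonClass γ] (μ : Measure α)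
    (ν : Measure β) [SFinite ν] {f : α → γ} (hf : Measurable f) {E : γ → Set β}
    (hE : ∀ c, MeasurableSet (E c)) :
    μ.prod ν {ω | ω.2 ∈ E (f ω.1)} = ∑' c, μ (f ⁻¹' {c}) * ν (E c) := by
  rw [setOf_mem_comp_eq_iUnion, measure_iUnion]
  · simp_rw [Measure.prod_prod]
  · intro c c' hcc'
    exact Set.disjoint_prod.2 (Or.inl ((Set.disjoint_singleton.2 hcc').preimage f))
  · exact fun c => (hf (measurableSet_singleton c)).prod (hE c)

abbrev UpperPair (n : ℕ) := {p : Fin n × Fin n // p.1 < p.2}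

def upperEntries {n : ℕ} {α : Type*} (u : Fin n → Fin n → α) : UpperPair n → α :=
  fun p => u p.1.1 p.1.2

lemma measurable_upperEntries {n : ℕ} {α : Type*} [MeasurableSpace α] :
    Measurable (upperEntries : (Fin n → Fin n → α) → UpperPair n → α) := by
  unfold upperEntries; fun_prop

lemma prod_prod_dite_lt {n : ℕ} {M : Type*} [CommMonoid M] (g : UpperPair n → M) :
    ∏ i, ∏ j, (if h : i < j then g ⟨(i, j), h⟩ else 1) = ∏ p, g p := by
  rw [← Fintype.prod_prod_type' (fun i j : Fin n => if h : i < j then g ⟨(i, j), h⟩ else 1)]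
  rw [Fintype.prod_dite (p := fun x : Fin n × Fin n => x.1 < x.2)]
  simp

lemma map_upperEntries_pi {n : ℕ} {α : Type*} [MeasurableSpace α] (μ : Measure α)
    [IsProbabilityMeasure μ] :
    (Measure.pi fun _ : Fin n => Measure.pi fun _ : Fin n => μ).map upperEntries =
      Measure.pi fun _ : UpperPair n => μ := by
  refine (Measure.pi_eq fun S hS => ?_).symm
  have : upperEntries ⁻¹' Set.univ.pi S =
      Set.univ.pi fun i => Set.univ.pi fun j => if h : i < j then S ⟨(i, j), h⟩ else Set.univ := by
    ext u
    simp only [Set.mem_preimage, Set.mem_pi, Set.mem_univ, forall_const, upperEntries]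
    refine ⟨fun hu i j => ?_, fun hu p => by simpa [p.2] using hu p.1.1 p.1.2⟩
    split_ifs with h
    exacts [hu ⟨(i, j), h⟩, trivial]
  rw [Measure.map_apply measurable_upperEntries (.univ_pi hS), this, Measure.pi_pi]
  simp_rw [Measure.pi_pi, apply_dite, measure_univ]
  exact prod_prod_dite_lt fun p => μ (S p)

lemma Monotone.le_iff_lt_card_filter {n : ℕ} {α : Type*} [LinearOrder α] {g : Fin n → α}
    (hg : Monotone g) (t : α) (i : Fin n) : g i ≤ t ↔ (i : ℕ) < #{j | g j ≤ t} := by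
  constructor
  · intro h
    have := card_le_card fun j (hj : j ∈ Iic i) =>
      mem_filter.2 ⟨mem_univ j, (hg (mem_Iic.1 hj)).trans h⟩
    rw [Fin.card_Iic] at this
    omega
  · intro h
    by_contra! hlt
    have := card_le_card fun j (hj : j ∈ filter (fun j => g j ≤ t) univ) =>
      mem_Iio.2 (lt_of_not_ge fun hij => (hlt.trans_le (hg hij)).not_ge (mem_filter.1 hj).2)
    rw [Fin.card_Iio] at this
    omega

lemma sortedVec_le_iff {n : ℕ} (ξ : Fin n → ℝ) (t : ℝ) (i : Fin n) :
    sortedVec ξ i ≤ t ↔ (i : ℕ) < #{j | ξ j ≤ t} := by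
  unfold sortedVec
  rw [(Tuple.monotone_sort ξ).le_iff_lt_card_filter t i]
  simp only [card_filter, Function.comp_apply]
  rw [Equiv.sum_comp (Tuple.sort ξ) fun j => if ξ j ≤ t then 1 else 0]

noncomputable def blockProb {n : ℕ} (ρ : ℝ) (k : ℕ) (i j : Fin n) : ℝ :=
  ρ * if ((i : ℕ) < k ↔ (j : ℕ) < k) then 3/4 else 1/4

lemma blockProb_mem_Ioo {n : ℕ} {ρ : ℝ} (hρ : ρ ∈ Set.Ioc (0:ℝ) 1) (k : ℕ) (i j : Fin n) :
    blockProb ρ k i j ∈ Set.Ioo (0:ℝ) 1 := by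
  obtain ⟨h0, h1⟩ := hρ
  unfold blockProb
  split_ifs <;> constructor <;> nlinarith

lemma Wm_eq (m x y : ℝ) : Wm m x y = if (x ≤ 1/2 + m ↔ y ≤ 1/2 + m) then 3/4 else 1/4 := by
  unfold Wm
  congr 1
  simp only [← not_le, eq_iff_iff]
  tauto

lemma Qmat_Wm {n : ℕ} (m ρ : ℝ) (ξ : Fin n → ℝ) (i j : Fin n) :
    Qmat n (Wm m) ρ ξ i j = blockProb ρ #{k | ξ k ≤ 1/2 + m} i j := by
  simp only [Qmat, Matrix.of_apply, Wm_eq, sortedVec_le_iff, blockProb]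

noncomputable def symmOfUpper {n : ℕ} (b : UpperPair n → Bool) : Fin n → Fin n → ℝ :=
  fun i j =>
    if h : i < j then (if b ⟨(i, j), h⟩ then 1 else 0)
    else if h : j < i then (if b ⟨(j, i), h⟩ then 1 else 0) else 0

lemma symmOfUpper_injective {n : ℕ} : Function.Injective (symmOfUpper (n := n)) := by
  intro b b' h
  funext p
  have := congrFun (congrFun h p.1.1) p.1.2
  simp only [symmOfUpper, dif_pos p.2] at this
  cases hb : b p <;> cases hb' : b' p <;> simp_all

noncomputable def edgeThreshold {n : ℕ} (ρ : ℝ) (σ : Fin n → Bool) : UpperPair n → ℝ :=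
  fun p => blockProb ρ #{i | σ i} p.1.1 p.1.2

lemma edgeThreshold_mem_Ioo {n : ℕ} {ρ : ℝ} (hρ : ρ ∈ Set.Ioc (0:ℝ) 1) (σ : Fin n → Bool)
    (p : UpperPair n) : edgeThreshold ρ σ p ∈ Set.Ioo (0:ℝ) 1 :=
  blockProb_mem_Ioo hρ _ _ _

noncomputable def edgePattern (n : ℕ) (m ρ : ℝ) (ω : (Fin n → ℝ) × (Fin n → Fin n → ℝ)) :
    UpperPair n → Bool :=
  thresholdPattern (edgeThreshold ρ (thresholdPattern (fun _ => 1/2 + m) ω.1)) (upperEntries ω.2)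

lemma Amat_Wm_eq {n : ℕ} (m ρ : ℝ) (ω : (Fin n → ℝ) × (Fin n → Fin n → ℝ)) :
    (fun i j => Amat n (Wm m) ρ ω i j) = symmOfUpper (edgePattern n m ρ ω) := by
  funext i j
  rcases lt_trichotomy i j with h | rfl | h
  · simp [Amat, symmOfUpper, edgePattern, thresholdPattern, edgeThreshold, upperEntries, Qmat_Wm,
      h, h.ne]
  · simp [Amat, symmOfUpper]
  · simp [Amat, symmOfUpper, edgePattern, thresholdPattern, edgeThreshold, upperEntries, Qmat_Wm,
      h, h.ne', h.not_gt]

lemma edgePattern_preimage {n : ℕ} (m ρ : ℝ) (b : UpperPair n → Bool) :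
    edgePattern n m ρ ⁻¹' {b} = {ω | ω.2 ∈ upperEntries ⁻¹' (thresholdPattern
      (edgeThreshold ρ (thresholdPattern (fun _ => 1/2 + m) ω.1)) ⁻¹' {b})} :=
  rfl

lemma measurable_edgePattern {n : ℕ} (m ρ : ℝ) : Measurable (edgePattern n m ρ) :=
  measurable_to_countable' fun b => by
    rw [edgePattern_preimage]
    exact measurableSet_setOf_mem_comp (measurable_thresholdPattern _) fun σ =>
      measurable_upperEntries (measurable_thresholdPattern _ (measurableSet_singleton b))

lemma map_edgePattern_apply {n : ℕ} {m ρ : ℝ} (hm : m ∈ Set.Icc (-1/2 : ℝ) (1/2))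
    (hρ : ρ ∈ Set.Ioc (0:ℝ) 1) (b : UpperPair n → Bool) :
    ((Pg n).map (edgePattern n m ρ) {b}).toReal =
      ∑ σ, prodBernMass (fun _ => 1/2 + m) σ * prodBernMass (edgeThreshold ρ σ) b := by
  have ht : (1/2 + m) ∈ Set.Icc (0:ℝ) 1 := ⟨by linarith [hm.1], by linarith [hm.2]⟩
  have hθ : ∀ (σ : Fin n → Bool) p, edgeThreshold ρ σ p ∈ Set.Icc (0:ℝ) 1 := fun σ p =>
    Set.Ioo_subset_Icc_self (edgeThreshold_mem_Ioo hρ σ p)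
  have hterm : ∀ σ, 0 ≤ prodBernMass (fun _ => 1/2 + m) σ * prodBernMass (edgeThreshold ρ σ) b :=
    fun σ => mul_nonneg (prodBernMass_nonneg (fun _ => ht) σ) (prodBernMass_nonneg (hθ σ) b)
  rw [Measure.map_apply (measurable_edgePattern m ρ) (measurableSet_singleton b),
    edgePattern_preimage, Pg, Measure.prod_setOf_mem_comp _ _ (measurable_thresholdPattern _)
      fun σ => measurable_upperEntries (measurable_thresholdPattern _ (measurableSet_singleton b)),
    tsum_fintype, ← ENNReal.toReal_ofReal (sum_nonneg fun σ _ => hterm σ),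
    ENNReal.ofReal_sum_of_nonneg fun σ _ => hterm σ]
  congr 1
  refine sum_congr rfl fun σ _ => ?_
  rw [← Measure.map_apply measurable_upperEntries
      (measurable_thresholdPattern _ (measurableSet_singleton b)),
    map_upperEntries_pi, Pxi, pi_unif01_thresholdPattern_preimage (fun _ => ht),
    pi_unif01_thresholdPattern_preimage (hθ σ),
    ENNReal.ofReal_mul (prodBernMass_nonneg (fun _ => ht) σ)]

lemma map_Amat_Wm (n : ℕ) (m ρ : ℝ) :
    Measure.map (fun ω => fun i j : Fin n => Amat n (Wm m) ρ ω i j) (Pg n) =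
      ((Pg n).map (edgePattern n m ρ)).map symmOfUpper := by
  rw [Measure.map_map .of_discrete (measurable_edgePattern m ρ)]
  exact congrArg (fun f => Measure.map f (Pg n)) (funext (Amat_Wm_eq m ρ))

theorem stmt8_general (n : ℕ) (ρ : ℝ) (hρ : ρ ∈ Set.Ioc (0:ℝ) 1)
    (Δ : ℝ) (hΔ : Δ ∈ Set.Ioo (0:ℝ) (1/2)) :
    KLfin (Measure.map (fun ω => fun i j : Fin n => Amat n (Wm Δ) ρ ω i j) (Pg n))
        (Measure.map (fun ω => fun i j : Fin n => Amat n (Wm 0) ρ ω i j) (Pg n)) ≤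
      16 * n * Δ ^ 2 := by
  have hΔ' : Δ ∈ Set.Icc (-1/2 : ℝ) (1/2) := ⟨by linarith [hΔ.1], hΔ.2.le⟩
  have ht : 1/2 + Δ ∈ Set.Ioo (0:ℝ) 1 := ⟨by linarith [hΔ.1], by linarith [hΔ.2]⟩
  rw [map_Amat_Wm, map_Amat_Wm, KLfin_map_of_injective _ _ symmOfUpper_injective]
  simp only [map_edgePattern_apply hΔ' hρ, map_edgePattern_apply (by norm_num : (0:ℝ) ∈ _) hρ,
    add_zero]
  calc _ ≤ ∑ σ : Fin n → Bool, prodBernMass (fun _ => 1/2 + Δ) σ *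
          Real.log (prodBernMass (fun _ => 1/2 + Δ) σ / prodBernMass (fun _ => 1/2) σ) :=
        sum_mixture_mul_log_div_le _ _ _ (prodBernMass_pos fun _ => ht)
          (prodBernMass_pos fun _ => by norm_num)
          (fun σ => prodBernMass_pos (edgeThreshold_mem_Ioo hρ σ)) fun σ => sum_prodBernMass _
    _ ≤ n * (2 * (1/2 + Δ) - 1) ^ 2 := by
        simpa using sum_prodBernMass_mul_log_div_half_le (ι := Fin n) ht
    _ ≤ 16 * n * Δ ^ 2 := by nlinarith [mul_nonneg (Nat.cast_nonneg n : (0:ℝ) ≤ n) (sq_nonneg Δ)]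

/-- the KL divergence between the laws of the adjacency matrices sampled from
`W_Δ` and from `W_0` (with sparsity `ρ`) is at most `16 n Δ²`. -/
theorem stmt8 (n : ℕ) (hn : 1 ≤ n) (ρ : ℝ) (hρ : ρ ∈ Set.Ioc (0:ℝ) 1)
    (Δ : ℝ) (hΔ : Δ ∈ Set.Ioo (0:ℝ) (1/2)) :
    KLfin (Measure.map (fun ω => fun i j : Fin n => Amat n (Wm Δ) ρ ω i j) (Pg n))
        (Measure.map (fun ω => fun i j : Fin n => Amat n (Wm 0) ρ ω i j) (Pg n)) ≤
      16 * n * Δ ^ 2 :=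
  stmt8_general n ρ hρ Δ hΔ
end

section
/- Let M > 0 and r > 0 and let W : [0,1]² → [0,1] be (M,r)-analytic. Let ℓ be a positive integer with ℓ ≥ 2/r and let p ≥ 1 be an integer. Then there exist an integer m ≤ ℓ²·p and functions φ₁,…,φ_m, ψ₁,…,ψ_m : [0,1] → ℝ such that sup_{(x,y) ∈ [0,1]²} |W(x,y) − Σ_{s=1}^m φ_s(x)·ψ_s(y)| ≤ M·2^{1−p}. -/
/-- `(M, r)`-analyticity of a graphon `W : [0,1]² → [0,1]`: there are coefficient functions
`c k` with `|c k x y| ≤ M r⁻ᵏ` such that `W` is given, in each variable separately, by the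
corresponding power series of radius `r` around every point. -/
def IsAnalytic (M r : ℝ) (W : ℝ → ℝ → ℝ) : Prop :=
  ∃ c : ℕ → ℝ → ℝ → ℝ,
    (∀ (k : ℕ) (x y : ℝ), x ∈ Set.Icc (0:ℝ) 1 → y ∈ Set.Icc (0:ℝ) 1 →
      |c k x y| ≤ M / r ^ k) ∧
    (∀ x₀ y x : ℝ, x₀ ∈ Set.Icc (0:ℝ) 1 → y ∈ Set.Icc (0:ℝ) 1 → x ∈ Set.Icc (0:ℝ) 1 →
      |x - x₀| < r → W x y = ∑' k : ℕ, c k x₀ y * (x - x₀) ^ k) ∧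
    (∀ y₀ x y : ℝ, y₀ ∈ Set.Icc (0:ℝ) 1 → x ∈ Set.Icc (0:ℝ) 1 → y ∈ Set.Icc (0:ℝ) 1 →
      |y - y₀| < r → W x y = ∑' k : ℕ, c k x y₀ * (y - y₀) ^ k)

/-!
Cut `[0,1]` into `ℓ` cells of length `1/ℓ ≤ r/2`. For `x` in the cell with left endpoint `x₀`,
expanding `W(·, y)` around `x₀` and keeping `p` terms gives `∑_{k<p} c_k(x₀, y) (x - x₀)^k`;
as `x₀` ranges over the cells this is a sum of `ℓ p` products of a function of `x` (the cell's
indicator times `(x - x₀)^k`) and a function of `y`. Since `|c_k| |x - x₀|^k ≤ M 2^{-k}`, the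
discarded tail is at most `M 2^{1-p}`.
-/

open Finset

-- The `min` puts `x = 1` into the last cell rather than a cell of its own.
noncomputable def cellIndex (ℓ : ℕ) (x : ℝ) : ℕ := min ⌊ℓ * x⌋₊ (ℓ - 1)

noncomputable def cellMonomial (ℓ i k : ℕ) (x : ℝ) : ℝ :=
  if cellIndex ℓ x = i then (x - i / ℓ) ^ k else 0

section cellIndex

variable {ℓ : ℕ} {x : ℝ}

lemma cellIndex_lt (hℓ : 1 ≤ ℓ) : cellIndex ℓ x < ℓ :=
  (min_le_right _ _).trans_lt (Nat.sub_one_lt_of_le hℓ le_rfl)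

lemma cellIndex_div_mem_Icc (hℓ : 1 ≤ ℓ) : (cellIndex ℓ x : ℝ) / ℓ ∈ Set.Icc 0 1 := by
  have hℓ' : (0 : ℝ) < ℓ := by exact_mod_cast hℓ
  refine ⟨by positivity, (div_le_one hℓ').2 ?_⟩
  exact_mod_cast (cellIndex_lt hℓ).le

lemma cellIndex_div_le (hx : 0 ≤ x) : (cellIndex ℓ x : ℝ) / ℓ ≤ x := by
  refine div_le_of_le_mul₀ (Nat.cast_nonneg _) hx ?_
  calc (cellIndex ℓ x : ℝ) ≤ ⌊ℓ * x⌋₊ := by exact_mod_cast min_le_left _ _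
    _ ≤ ℓ * x := Nat.floor_le (by positivity)
    _ = x * ℓ := mul_comm _ _

lemma le_cellIndex_add_one (hℓ : 1 ≤ ℓ) (hx : x ≤ 1) : ℓ * x ≤ cellIndex ℓ x + 1 := by
  have hcast : ((ℓ - 1 : ℕ) : ℝ) + 1 = ℓ := by rw [Nat.cast_sub hℓ]; ring
  rw [cellIndex, Nat.cast_min, ← min_add_add_right, hcast]
  refine le_min (Nat.lt_floor_add_one _).le ?_
  nlinarith [(Nat.cast_nonneg ℓ : (0 : ℝ) ≤ ℓ)]

lemma abs_sub_cellIndex_div_le (hℓ : 1 ≤ ℓ) (hx : x ∈ Set.Icc 0 1) :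
    |x - cellIndex ℓ x / ℓ| ≤ 1 / ℓ := by
  have hℓ' : (0 : ℝ) < ℓ := by exact_mod_cast hℓ
  rw [abs_of_nonneg (sub_nonneg.2 (cellIndex_div_le hx.1)), sub_le_iff_le_add, ← add_div,
    le_div_iff₀ hℓ', mul_comm, add_comm]
  exact le_cellIndex_add_one hℓ hx.2

end cellIndex

lemma sum_cellMonomial_mul {ℓ : ℕ} (hℓ : 1 ≤ ℓ) (p : ℕ) (a : ℕ → ℝ → ℝ) (x : ℝ) :
    ∑ i : Fin ℓ × Fin p, cellMonomial ℓ i.1 i.2 x * a i.2 (i.1 / ℓ)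
      = ∑ k ∈ range p, a k (cellIndex ℓ x / ℓ) * (x - cellIndex ℓ x / ℓ) ^ k := by
  rw [Fintype.sum_prod_type,
    Fin.sum_univ_eq_sum_range (fun i => ∑ k : Fin p, cellMonomial ℓ i k x * a k (i / ℓ)) ℓ]
  simp only [cellMonomial, ite_mul, zero_mul, sum_ite_irrel, sum_const_zero, sum_ite_eq,
    mem_range, cellIndex_lt hℓ, if_true]
  rw [← Fin.sum_univ_eq_sum_range]
  exact sum_congr rfl fun k _ => mul_comm _ _

lemma abs_tsum_sub_sum_range_le {f : ℕ → ℝ} {M : ℝ} (hf : ∀ k, |f k| ≤ M * (1 / 2) ^ k)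
    (p : ℕ) : |∑' k, f k - ∑ k ∈ range p, f k| ≤ M * 2 ^ ((1 : ℤ) - p) := by
  have hgeom := hasSum_geometric_two.mul_left (M * (1 / 2) ^ p)
  have hsum : Summable f :=
    .of_norm_bounded (hasSum_geometric_two.mul_left M).summable hf
  rw [← hsum.sum_add_tsum_nat_add p, add_sub_cancel_left]
  calc |∑' k, f (k + p)| = ‖∑' k, f (k + p)‖ := (Real.norm_eq_abs _).symm
    _ ≤ M * (1 / 2) ^ p * 2 :=
      tsum_of_norm_bounded hgeom fun k => (hf (k + p)).trans_eq (by rw [pow_add]; ring)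
    _ = M * 2 ^ ((1 : ℤ) - p) := by
      rw [zpow_sub₀ two_ne_zero, zpow_natCast, one_div, inv_pow]
      field_simp

lemma abs_tsum_sub_sum_range_pow_le {a : ℕ → ℝ} {M r t : ℝ} (hr : 0 < r)
    (ha : ∀ k, |a k| ≤ M / r ^ k) (ht : |t| ≤ r / 2) (p : ℕ) :
    |∑' k, a k * t ^ k - ∑ k ∈ range p, a k * t ^ k| ≤ M * 2 ^ ((1 : ℤ) - p) := by
  refine abs_tsum_sub_sum_range_le (fun k => ?_) p
  calc |a k * t ^ k| = |a k| * |t| ^ k := by rw [abs_mul, abs_pow]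
    _ ≤ M / r ^ k * (r / 2) ^ k := by gcongr; exacts [(abs_nonneg _).trans (ha k), ha k]
    _ = M * (1 / 2) ^ k := by rw [div_pow, div_pow, one_pow]; field_simp

lemma exists_fin_sum_mul_eq {ι α β R : Type*} [Fintype ι] [NonUnitalNonAssocSemiring R]
    (φ : ι → α → R) (ψ : ι → β → R) :
    ∃ (φ' : Fin (Fintype.card ι) → α → R) (ψ' : Fin (Fintype.card ι) → β → R),
      ∀ x y, ∑ s, φ' s x * ψ' s y = ∑ i, φ i x * ψ i y :=
  ⟨φ ∘ (Fintype.equivFin ι).symm, ψ ∘ (Fintype.equivFin ι).symm, fun x y =>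
    (Fintype.equivFin ι).symm.sum_comp fun i => φ i x * ψ i y⟩

theorem stmt15_general (M r : ℝ) (hr : 0 < r) (W : ℝ → ℝ → ℝ)
    (hW : IsAnalytic M r W)
    (ℓ p : ℕ) (hℓ : 1 ≤ ℓ) (hℓr : 2 / r ≤ (ℓ : ℝ)) :
    ∃ (m : ℕ) (φ ψ : Fin m → ℝ → ℝ), m ≤ ℓ ^ 2 * p ∧
      ∀ x y : ℝ, x ∈ Set.Icc (0:ℝ) 1 → y ∈ Set.Icc (0:ℝ) 1 →
        |W x y - ∑ s : Fin m, φ s x * ψ s y| ≤ M * (2:ℝ) ^ ((1:ℤ) - p) := by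
  obtain ⟨c, hc, hexp, -⟩ := hW
  obtain ⟨φ, ψ, hφψ⟩ := exists_fin_sum_mul_eq
    (fun i : Fin ℓ × Fin p => cellMonomial ℓ i.1 i.2) (fun i y => c i.2 (i.1 / ℓ) y)
  have hcell : 1 / (ℓ : ℝ) ≤ r / 2 := by
    rw [div_le_iff₀ hr] at hℓr
    rw [div_le_div_iff₀ (by positivity) two_pos]
    linarith
  refine ⟨_, φ, ψ, ?_, fun x y hx hy => ?_⟩
  · rw [Fintype.card_prod, Fintype.card_fin, Fintype.card_fin, sq]
    exact Nat.mul_le_mul_right p (Nat.le_mul_of_pos_left ℓ hℓ)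
  have hx₀ := cellIndex_div_mem_Icc (x := x) hℓ
  have hdist := (abs_sub_cellIndex_div_le hℓ hx).trans hcell
  rw [hφψ, sum_cellMonomial_mul hℓ p (fun k z => c k z y),
    hexp _ y x hx₀ hy hx (hdist.trans_lt (by linarith))]
  exact abs_tsum_sub_sum_range_pow_le hr (fun k => hc k _ y hx₀ hy) hdist p

/-- an `(M, r)`-analytic graphon admits, for every integer `ℓ ≥ 2/r` and `p ≥ 1`,
a rank-`(ℓ² p)` approximation of uniform accuracy `M 2^{1−p}`. -/
theorem stmt15 (M r : ℝ) (hM : 0 < M) (hr : 0 < r) (W : ℝ → ℝ → ℝ)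
    (hrange : ∀ x y : ℝ, x ∈ Set.Icc (0:ℝ) 1 → y ∈ Set.Icc (0:ℝ) 1 →
      W x y ∈ Set.Icc (0:ℝ) 1)
    (hW : IsAnalytic M r W)
    (ℓ p : ℕ) (hℓ : 1 ≤ ℓ) (hℓr : 2 / r ≤ (ℓ : ℝ)) (hp : 1 ≤ p) :
    ∃ (m : ℕ) (φ ψ : Fin m → ℝ → ℝ), m ≤ ℓ ^ 2 * p ∧
      ∀ x y : ℝ, x ∈ Set.Icc (0:ℝ) 1 → y ∈ Set.Icc (0:ℝ) 1 →
        |W x y - ∑ s : Fin m, φ s x * ψ s y| ≤ M * (2:ℝ) ^ ((1:ℤ) - p) :=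
  stmt15_general M r hr W hW ℓ p hℓ hℓr
end
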